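/- (Distortion with respect to perturbations.) Let (F_p)_{p∈P} be a family of C^r-skew-products satisfying assumption (U). For every ε' > 1 there exist D₄ > 1 and θ₀ > 0 such that for every parameterized family 𝔽 of θ-U-perturbations with θ ≤ θ₀, for every t ∈ T, 𝔞 ∈ 𝒜^ℕ, p in the closure of P and every finite word α ∈ 𝒜^*: Λ_{p,𝔞,α}^{ε'}/D₄ < Λ̃_{t,p,𝔞,α} < D₄·Λ_{p,𝔞,α}^{1/ε'}, where Λ̃_{t,p,𝔞,α} is the maximum over x ∈ X of the modulus of the unique eigenvalue of the differential Dψ̃^α_{t,p,𝔞}(x). -/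

import Mathlib

open Filter MeasureTheory Set
open scoped Topology ENNReal NNReal

noncomputable section

namespace Paper

abbrev E (n : ℕ) : Type := EuclideanSpace ℝ (Fin n)

def cube (N : ℕ) : Set (E N) := {x | ∀ i, x i ∈ Icc (-1:ℝ) 1}

def cubeO (d : ℕ) : Set (E d) := {p | ∀ i, p i ∈ Ioo (-1:ℝ) 1}

variable {A : Type}

def consF (a : A) (𝔞 : ℕ → A) : ℕ → A := fun n =>
  match n with
  | 0 => a
  | Nat.succ k => 𝔞 k

def app : List A → (ℕ → A) → ℕ → A
  | [], 𝔞 => 𝔞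
  | a :: w, 𝔞 => app w (consF a 𝔞)

def trunc (α : ℕ → A) (n : ℕ) : List A := List.ofFn fun i : Fin n => α i

def cyl (w : List A) : Set (ℕ → A) := {α | ∀ i : Fin w.length, α i = w.get i}

variable {N d : ℕ}

def psi (f : E d → (ℕ → A) → E N → E N) (p : E d) : List A → (ℕ → A) → E N → E N
  | [], _ => id
  | a :: w, 𝔞 => f p (consF a 𝔞) ∘ psi f p w (consF a 𝔞)

def dentry (g : E N → E N) (x : E N) (i j : Fin N) : ℝ :=
  fderiv ℝ g x (EuclideanSpace.single j (1:ℝ)) i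

def lam (hN : 0 < N) (f : E d → (ℕ → A) → E N → E N) (p : E d) (𝔞 : ℕ → A)
    (w : List A) (x : E N) : ℝ :=
  |dentry (psi f p w 𝔞) x ⟨0, hN⟩ ⟨0, hN⟩|

def Lam (hN : 0 < N) (f : E d → (ℕ → A) → E N → E N) (p : E d) (𝔞 : ℕ → A)
    (w : List A) : ℝ :=
  sSup ((fun x => lam hN f p 𝔞 w x) '' cube N)

def piProj (f : E d → (ℕ → A) → E N → E N) (p : E d) (𝔞 α : ℕ → A) : E N :=
  limUnder atTop fun n => psi f p (trunc α n) 𝔞 0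

def Mop (g : E N → E N) : ℝ := sSup ((fun x => ‖fderiv ℝ g x‖) '' cube N)

def pressure [Fintype A] (f : E d → (ℕ → A) → E N → E N) (p : E d) (𝔞 : ℕ → A) (s : ℝ) : ℝ :=
  limUnder atTop fun n : ℕ =>
    (1 / n : ℝ) * Real.log (∑ w : Fin n → A, Mop (psi f p (List.ofFn w) 𝔞) ^ s)

structure SkewFamily (A : Type) (N d : ℕ) (r : ℕ∞) where
  f : E d → (ℕ → A) → E N → E N
  X' : Set (E N)
  P' : Set (E d)
  X'_open : IsOpen X'
  X_subset : cube N ⊆ X'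
  P'_open : IsOpen P'
  P_subset : closure (cubeO d) ⊆ P'
  smooth : ∀ 𝔞 : ℕ → A, ContDiffOn ℝ r (fun q : E d × E N => f q.1 𝔞 q.2) (P' ×ˢ X')
  inj : ∀ 𝔞 : ℕ → A, ∀ p ∈ P', Set.InjOn (f p 𝔞) X'
  into : ∀ 𝔞 : ℕ → A, ∀ p ∈ P', f p 𝔞 '' X' ⊆ cube N
  holder0 : ∃ C > (0:ℝ), ∃ θ ∈ Set.Ioo (0:ℝ) 1, ∀ p ∈ P', ∀ (𝔞 𝔟 : ℕ → A) (q : ℕ),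
      (∀ i < q, 𝔞 i = 𝔟 i) → ∀ x ∈ X', ‖f p 𝔞 x - f p 𝔟 x‖ ≤ C * θ ^ q
  holder1 : ∃ C > (0:ℝ), ∃ θ ∈ Set.Ioo (0:ℝ) 1, ∀ p ∈ P', ∀ (𝔞 𝔟 : ℕ → A) (q : ℕ),
      (∀ i < q, 𝔞 i = 𝔟 i) → ∀ x ∈ X',
      ‖fderiv ℝ (f p 𝔞) x - fderiv ℝ (f p 𝔟) x‖ ≤ C * θ ^ q
  cont2 : ∀ p ∈ P', ∀ 𝔞 : ℕ → A, ∀ ε > (0:ℝ), ∃ q : ℕ, ∀ 𝔟 : ℕ → A,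
      (∀ i < q, 𝔞 i = 𝔟 i) → ∀ x ∈ X',
      ‖iteratedFDeriv ℝ 2 (f p 𝔞) x - iteratedFDeriv ℝ 2 (f p 𝔟) x‖ ≤ ε

def UnipOn (hN : 0 < N) (f : E d → (ℕ → A) → E N → E N)
    (P' : Set (E d)) (X' : Set (E N)) : Prop :=
  ∀ p ∈ P', ∀ 𝔞 : ℕ → A, ∀ x ∈ X',
    (∀ i j : Fin N, (i : ℕ) < (j : ℕ) → dentry (f p 𝔞) x i j = 0) ∧
    (∀ i j : Fin N, dentry (f p 𝔞) x i i = dentry (f p 𝔞) x j j) ∧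
    0 < |dentry (f p 𝔞) x ⟨0, hN⟩ ⟨0, hN⟩| ∧ |dentry (f p 𝔞) x ⟨0, hN⟩ ⟨0, hN⟩| < 1

def GammaBounds (hN : 0 < N) (f : E d → (ℕ → A) → E N → E N) (γ' γ : ℝ) : Prop :=
  0 < γ' ∧ γ' < γ ∧ γ < 1 ∧
  ∀ p ∈ closure (cubeO d), ∀ (𝔞 : ℕ → A) (a : A), ∀ x ∈ cube N,
    γ' < lam hN f p 𝔞 [a] x ∧ lam hN f p 𝔞 [a] x < γ

structure ParamPerturb {A : Type} {N d : ℕ} {r : ℕ∞} (hN : 0 < N)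
    (S : SkewFamily A N d r) (θ : ℝ) (τ : ℕ) where
  g : E τ → E d → (ℕ → A) → E N → E N
  jointSmooth : ∀ 𝔞 : ℕ → A, ContDiffOn ℝ r
      (fun q : E τ × E d × E N => g q.1 q.2.1 𝔞 q.2.2) ((cubeO τ) ×ˢ S.P' ×ˢ S.X')
  smooth : ∀ t ∈ cubeO τ, ∀ 𝔞 : ℕ → A, ContDiffOn ℝ r
      (fun q : E d × E N => g t q.1 𝔞 q.2) (S.P' ×ˢ S.X')
  inj : ∀ t ∈ cubeO τ, ∀ 𝔞 : ℕ → A, ∀ p ∈ S.P', Set.InjOn (g t p 𝔞) S.X'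
  into : ∀ t ∈ cubeO τ, ∀ 𝔞 : ℕ → A, ∀ p ∈ S.P', g t p 𝔞 '' S.X' ⊆ cube N
  close : ∃ θ' < θ, ∀ t ∈ cubeO τ, ∀ (𝔞 : ℕ → A) (k : ℕ), (k : ℕ∞) ≤ r →
      ∀ p ∈ S.P', ∀ x ∈ S.X',
      ‖iteratedFDeriv ℝ k (fun q : E d × E N => S.f q.1 𝔞 q.2 - g t q.1 𝔞 q.2) (p, x)‖ ≤ θ'
  unip : ∀ t ∈ cubeO τ, UnipOn hN (g t) S.P' S.X'

def TransAssumption {A : Type} {N d : ℕ} {r : ℕ∞} (hN : 0 < N)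
    (S : SkewFamily A N d r) : Prop :=
  ∃ C > (0:ℝ),
    (∀ 𝔞 α β : ℕ → A, α 0 ≠ β 0 → ∀ rr > (0:ℝ),
      volume {p ∈ cubeO d | ‖piProj S.f p 𝔞 α - piProj S.f p 𝔞 β‖ < rr}
        ≤ ENNReal.ofReal (C * rr ^ N)) ∧
    ∃ θ₀ > (0:ℝ), ∀ θ : ℝ, 0 < θ → θ ≤ θ₀ → ∀ τ : ℕ, 0 < τ →
      ∀ Ft : ParamPerturb hN S θ τ, ∀ t ∈ cubeO τ,
      ∀ 𝔞 α β : ℕ → A, α 0 ≠ β 0 → ∀ rr > (0:ℝ),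
        volume {p ∈ cubeO d | ‖piProj (Ft.g t) p 𝔞 α - piProj (Ft.g t) p 𝔞 β‖ < rr}
          ≤ ENNReal.ofReal (C * rr ^ N)

def dens {N : ℕ} (ν : Measure (E N)) (x : E N) : ℝ≥0∞ :=
  liminf (fun rr : ℝ => ν (Metric.ball x rr) / volume (Metric.ball (0 : E N) rr)) (𝓝[>] (0:ℝ))

end Paper

namespace IFS

open Paper

variable {A : Type}

def psiA (c b : ℝ → A → ℝ) (p : ℝ) : List A → ℝ → ℝ
  | [], x => x
  | a :: w, x => c p a * psiA c b p w x + b p a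

def piA (c b : ℝ → A → ℝ) (p : ℝ) (α : ℕ → A) : ℝ :=
  limUnder atTop fun n => psiA c b p (Paper.trunc α n) 0

def LamA (c : ℝ → A → ℝ) (p : ℝ) (w : List A) : ℝ := (w.map fun a => |c p a|).prod

def IFSHyp (c b : ℝ → A → ℝ) (U : Set ℝ) : Prop :=
  IsOpen U ∧ Icc (-1:ℝ) 1 ⊆ U ∧
  (∀ a : A, ContinuousOn (fun p => c p a) U) ∧
  (∀ a : A, ContinuousOn (fun p => b p a) U) ∧
  (∀ p ∈ U, ∀ a : A, ∀ x ∈ Icc (-1:ℝ) 1, c p a * x + b p a ∈ Ioo (-1:ℝ) 1)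

def GammaBoundsA (c : ℝ → A → ℝ) (γ' γ : ℝ) : Prop :=
  0 < γ' ∧ γ' < γ ∧ γ < 1 ∧ ∀ p ∈ Icc (-1:ℝ) 1, ∀ a : A, γ' < |c p a| ∧ |c p a| < γ

def TransAff (c b : ℝ → A → ℝ) : Prop :=
  ∃ C > (0:ℝ), ∀ α β : ℕ → A, α 0 ≠ β 0 → ∀ rr > (0:ℝ),
    volume {p ∈ Ioo (-1:ℝ) 1 | |piA c b p α - piA c b p β| < rr} ≤ ENNReal.ofReal (C * rr)

def densR (ν : MeasureTheory.Measure ℝ) (x : ℝ) : ℝ≥0∞ :=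
  liminf (fun rr : ℝ => ν (Ioo (x - rr) (x + rr)) / ENNReal.ofReal (2 * rr)) (𝓝[>] (0:ℝ))

end IFS

namespace Paper


section AuxPoisson

variable {A : Type} {N d : ℕ}

/-- enlarged cube -/
def cubeE (N : ℕ) (δ : ℝ) : Set (E N) := {x | ∀ i, x i ∈ Icc (-(1+δ)) (1+δ)}

lemma cube_subset_cubeE {δ : ℝ} (hδ : 0 ≤ δ) : cube N ⊆ cubeE N δ := fun x hx i =>
  ⟨by linarith [(hx i).1], by linarith [(hx i).2]⟩

lemma cubeE_zero : cubeE N 0 = cube N := by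
  ext x; constructor <;> intro h i <;> [skip; skip] <;>
    · have := h i; norm_num at this ⊢; exact this

lemma convex_cubeE (δ : ℝ) : Convex ℝ (cubeE N δ) := by
  intro x hx y hy a b ha hb hab
  intro i
  have hxi := hx i; have hyi := hy i
  have : (a • x + b • y) i = a * x i + b * y i := rfl
  rw [this]
  constructor
  · nlinarith [hxi.1, hyi.1, hxi.2, hyi.2]
  · nlinarith [hxi.1, hyi.1, hxi.2, hyi.2]

lemma zero_mem_cube : (0 : E N) ∈ cube N := by
  intro i
  have : (0 : E N) i = 0 := rfl
  rw [this]; constructor <;> norm_num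

lemma abs_coord_le_norm (v : E N) (i : Fin N) : |v i| ≤ ‖v‖ := by
  have h := EuclideanSpace.norm_eq v
  rw [h]
  have h1 : |v i| = Real.sqrt (‖v i‖^2) := by
    rw [Real.sqrt_sq_eq_abs]; simp
  rw [h1]
  apply Real.sqrt_le_sqrt
  apply Finset.single_le_sum (f := fun j => ‖v j‖^2) (fun j _ => by positivity) (Finset.mem_univ i)

lemma euclid_decomp (v : E N) : v = ∑ j, (v j) • EuclideanSpace.single j (1:ℝ) := by
  ext i
  rw [WithLp.ofLp_sum, Fintype.sum_apply]
  have : ∀ j, ((v j) • EuclideanSpace.single j (1:ℝ)) i = v j * (if j = i then 1 else 0) := by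
    intro j
    simp [EuclideanSpace.single_apply, eq_comm]
  rw [Finset.sum_congr rfl fun j _ => this j]
  simp

lemma clm_coord (L : E N →L[ℝ] E N) (v : E N) (i : Fin N) :
    L v i = ∑ j, v j * (L (EuclideanSpace.single j (1:ℝ)) i) := by
  conv_lhs => rw [euclid_decomp v]
  rw [map_sum]
  rw [WithLp.ofLp_sum, Fintype.sum_apply]
  congr 1; ext j
  simp

lemma isCompact_cube : IsCompact (cube N) := by
  have : cube N = (⋂ i : Fin N, {x : E N | x i ∈ Icc (-1:ℝ) 1}) := by
    ext x; simp [cube]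
  have hclosed : IsClosed (cube N) := by
    rw [this]
    apply isClosed_iInter
    intro i
    exact IsClosed.preimage (EuclideanSpace.proj (𝕜 := ℝ) i).continuous isClosed_Icc
  have hbdd : Bornology.IsBounded (cube N) := by
    apply Metric.isBounded_iff.2
    refine ⟨2 * Real.sqrt N, ?_⟩
    intro x hx y hy
    rw [dist_eq_norm]
    have : ‖x - y‖ ≤ Real.sqrt (∑ _j : Fin N, (2:ℝ)^2) := by
      rw [EuclideanSpace.norm_eq]
      apply Real.sqrt_le_sqrt
      apply Finset.sum_le_sum
      intro j _
      have h1 := hx j; have h2 := hy j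
      have : ‖(x - y) j‖ = |x j - y j| := rfl
      rw [this]
      have : |x j - y j| ≤ 2 := by
        rw [abs_le]; constructor <;> [linarith [h1.1, h2.2]; linarith [h1.2, h2.1]]
      nlinarith [abs_nonneg (x j - y j)]
    refine this.trans ?_
    rw [Finset.sum_const]
    simp only [Finset.card_univ, Fintype.card_fin, nsmul_eq_mul]
    rw [show ((N:ℝ) * 2^2) = (2 * Real.sqrt N)^2 * 1 by
      rw [mul_pow, Real.sq_sqrt (by positivity)]; ring]
    rw [mul_one, Real.sqrt_sq (by positivity)]
  exact Metric.isCompact_iff_isClosed_bounded.2 ⟨hclosed, hbdd⟩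

lemma isClosed_cube : IsClosed (cube N) := by
  have : cube N = (⋂ i : Fin N, {x : E N | x i ∈ Icc (-1:ℝ) 1}) := by
    ext x; simp [cube]
  rw [this]
  exact isClosed_iInter fun i =>
    IsClosed.preimage (EuclideanSpace.proj (𝕜 := ℝ) i).continuous isClosed_Icc

lemma closure_cubeO_subset : closure (cubeO d) ⊆ cube d :=
  closure_minimal (fun x hx i => ⟨(hx i).1.le, (hx i).2.le⟩) isClosed_cube

lemma exists_cubeE_subset {X' : Set (E N)} (hopen : IsOpen X') (hsub : cube N ⊆ X') :
    ∃ δ > (0:ℝ), cubeE N δ ⊆ X' := by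
  obtain ⟨ρ, hρ, hth⟩ := isCompact_cube.exists_thickening_subset_open hopen hsub
  refine ⟨ρ / (2 * (Real.sqrt N + 1)), by positivity, ?_⟩
  intro x hx
  apply hth
  rw [Metric.mem_thickening_iff]
  set δ := ρ / (2 * (Real.sqrt N + 1)) with hδdef
  have hδpos : 0 < δ := by positivity
  set y : E N := WithLp.toLp 2 (fun i => max (-1) (min 1 (x i))) with hy
  refine ⟨y, fun i => ⟨le_max_left _ _, max_le (by norm_num) (min_le_left _ _)⟩, ?_⟩
  have hcoord : ∀ i, |x i - y i| ≤ δ := by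
    intro i
    have hxi := hx i
    have hyi : y i = max (-1) (min 1 (x i)) := rfl
    rw [hyi]
    rcases le_or_gt (x i) (-1) with h | h
    · have : max (-1) (min 1 (x i)) = -1 := by
        rw [max_eq_left]; exact (min_le_right _ _).trans h
      rw [this, abs_le]
      constructor <;> [skip; linarith]
      have := hxi.1; simp only; linarith
    · rcases le_or_gt 1 (x i) with h2 | h2
      · have : max (-1) (min 1 (x i)) = 1 := by
          rw [min_eq_left h2, max_eq_right]; norm_num
        rw [this, abs_le]
        have := hxi.2; constructor <;> simp only <;> linarith
      · have : max (-1) (min 1 (x i)) = x i := by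
          rw [min_eq_right h2.le, max_eq_right h.le]
        rw [this]; simpa using hδpos.le
  have hdist : dist x y ≤ Real.sqrt N * δ := by
    rw [dist_eq_norm, EuclideanSpace.norm_eq]
    have : ∑ i, ‖(x - y) i‖^2 ≤ ∑ _i : Fin N, δ^2 := by
      apply Finset.sum_le_sum
      intro i _
      have : ‖(x - y) i‖ = |x i - y i| := rfl
      rw [this]
      nlinarith [hcoord i, abs_nonneg (x i - y i)]
    refine (Real.sqrt_le_sqrt this).trans ?_
    rw [Finset.sum_const]
    simp only [Finset.card_univ, Fintype.card_fin, nsmul_eq_mul]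
    rw [show (N:ℝ) * δ^2 = (Real.sqrt N * δ)^2 * 1 by
      rw [mul_pow, Real.sq_sqrt (by positivity)]; ring]
    rw [mul_one, Real.sqrt_sq (by positivity)]
  calc dist x y ≤ Real.sqrt N * δ := hdist
    _ < ρ := by
        have hc : (0:ℝ) < 2 * (Real.sqrt N + 1) := by positivity
        have h1 : Real.sqrt N * δ = ρ * (Real.sqrt N / (2 * (Real.sqrt N + 1))) := by
          rw [hδdef]; ring
        rw [h1]
        have h2 : Real.sqrt N / (2 * (Real.sqrt N + 1)) < 1 := by
          rw [div_lt_one hc]; nlinarith [Real.sqrt_nonneg (N:ℝ)]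
        nlinarith

lemma slice_hasFDerivAt {r : ℕ∞} {F : E d × E N → E N} {s : Set (E d)} {t : Set (E N)}
    (hs : IsOpen s) (ht : IsOpen t) (hF : ContDiffOn ℝ r F (s ×ˢ t)) (hr : 1 ≤ r)
    {p : E d} {x : E N} (hp : p ∈ s) (hx : x ∈ t) :
    HasFDerivAt (fun y => F (p, y))
      ((fderiv ℝ F (p, x)).comp (ContinuousLinearMap.inr ℝ (E d) (E N))) x := by
  have hdiff : DifferentiableAt ℝ F (p, x) :=
    (hF.differentiableOn (by have : r ≠ 0 := (lt_of_lt_of_le zero_lt_one hr).ne'; exact_mod_cast this)).differentiableAt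
      ((hs.prod ht).mem_nhds ⟨hp, hx⟩)
  exact hdiff.hasFDerivAt.comp x (hasFDerivAt_prodMk_right p x)

lemma slice_differentiableAt {r : ℕ∞} {F : E d × E N → E N} {s : Set (E d)} {t : Set (E N)}
    (hs : IsOpen s) (ht : IsOpen t) (hF : ContDiffOn ℝ r F (s ×ˢ t)) (hr : 1 ≤ r)
    {p : E d} {x : E N} (hp : p ∈ s) (hx : x ∈ t) :
    DifferentiableAt ℝ (fun y => F (p, y)) x :=
  (slice_hasFDerivAt hs ht hF hr hp hx).differentiableAt

lemma slice_fderiv_apply {r : ℕ∞} {F : E d × E N → E N} {s : Set (E d)} {t : Set (E N)}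
    (hs : IsOpen s) (ht : IsOpen t) (hF : ContDiffOn ℝ r F (s ×ˢ t)) (hr : 1 ≤ r)
    {p : E d} {x : E N} (hp : p ∈ s) (hx : x ∈ t) (v : E N) :
    fderiv ℝ (fun y => F (p, y)) x v = fderiv ℝ F (p, x) (0, v) := by
  rw [(slice_hasFDerivAt hs ht hF hr hp hx).fderiv]
  rfl

lemma dentry_sub_le {f g : E N → E N} {x : E N} (i j : Fin N) :
    |dentry f x i j - dentry g x i j| ≤ ‖fderiv ℝ f x - fderiv ℝ g x‖ := by
  have h1 : dentry f x i j - dentry g x i j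
      = ((fderiv ℝ f x - fderiv ℝ g x) (EuclideanSpace.single j (1:ℝ))) i := by
    simp [dentry, ContinuousLinearMap.sub_apply]
  rw [h1]
  refine (abs_coord_le_norm _ _).trans ?_
  refine (ContinuousLinearMap.le_opNorm _ _).trans ?_
  rw [EuclideanSpace.norm_single, norm_one, mul_one]

lemma row_zero_apply (hN : 0 < N) {g : E N → E N} {x : E N}
    (htri : ∀ j : Fin N, j ≠ ⟨0, hN⟩ → dentry g x ⟨0, hN⟩ j = 0) (v : E N) :
    fderiv ℝ g x v ⟨0, hN⟩ = v ⟨0, hN⟩ * dentry g x ⟨0, hN⟩ ⟨0, hN⟩ := by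
  rw [clm_coord]
  rw [Finset.sum_eq_single (⟨0, hN⟩ : Fin N)]
  · rfl
  · intro j _ hj
    rw [show fderiv ℝ g x (EuclideanSpace.single j 1) ⟨0,hN⟩ = dentry g x ⟨0,hN⟩ j from rfl,
      htri j hj, mul_zero]
  · simp

lemma dentry_comp (hN : 0 < N) {g₂ g₁ : E N → E N} {x : E N}
    (h₂ : DifferentiableAt ℝ g₂ (g₁ x)) (h₁ : DifferentiableAt ℝ g₁ x)
    (htri : ∀ j : Fin N, j ≠ ⟨0, hN⟩ → dentry g₂ (g₁ x) ⟨0, hN⟩ j = 0) :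
    dentry (g₂ ∘ g₁) x ⟨0, hN⟩ ⟨0, hN⟩
      = dentry g₂ (g₁ x) ⟨0, hN⟩ ⟨0, hN⟩ * dentry g₁ x ⟨0, hN⟩ ⟨0, hN⟩ := by
  have hc : fderiv ℝ (g₂ ∘ g₁) x = (fderiv ℝ g₂ (g₁ x)).comp (fderiv ℝ g₁ x) :=
    fderiv_comp x h₂ h₁
  unfold dentry
  rw [hc]
  have : ((fderiv ℝ g₂ (g₁ x)).comp (fderiv ℝ g₁ x)) (EuclideanSpace.single ⟨0,hN⟩ 1)
      = fderiv ℝ g₂ (g₁ x) (fderiv ℝ g₁ x (EuclideanSpace.single ⟨0,hN⟩ 1)) := rfl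
  rw [this, row_zero_apply hN htri]
  rw [mul_comm]
  rfl

section CoordZero
variable (hN : 0 < N) {g : E N → E N} {X' : Set (E N)}

lemma coordZero_hasFDerivAt {z : E N} (hdiff : DifferentiableAt ℝ g z) :
    HasFDerivAt (fun w => g w ⟨0, hN⟩)
      ((EuclideanSpace.proj (𝕜 := ℝ) (⟨0, hN⟩ : Fin N)).comp (fderiv ℝ g z)) z :=
  (EuclideanSpace.proj (𝕜 := ℝ) (⟨0, hN⟩ : Fin N)).hasFDerivAt.comp z hdiff.hasFDerivAt

lemma coordZero_const_on_slice
    (hdiff : ∀ z ∈ X', DifferentiableAt ℝ g z)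
    (htri : ∀ z ∈ X', ∀ j : Fin N, j ≠ ⟨0, hN⟩ → dentry g z ⟨0, hN⟩ j = 0)
    {s : Set (E N)} (hs : Convex ℝ s) (hsub : s ⊆ X')
    {y y' : E N} (hy : y ∈ s) (hy' : y' ∈ s) (hc : y ⟨0, hN⟩ = y' ⟨0, hN⟩) :
    g y ⟨0, hN⟩ = g y' ⟨0, hN⟩ := by
  set i0 : Fin N := ⟨0, hN⟩
  set c : ℝ := y' i0 with hcdef
  set sl : Set (E N) := {z ∈ s | z i0 = c} with hsl
  have hslconv : Convex ℝ sl := by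
    intro u hu v hv a b ha hb hab
    refine ⟨hs hu.1 hv.1 ha hb hab, ?_⟩
    have : (a • u + b • v) i0 = a * u i0 + b * v i0 := rfl
    rw [this, hu.2, hv.2]
    have : a * c + b * c = (a + b) * c := by ring
    rw [this, hab, one_mul]
  have key : ∀ z ∈ sl, HasFDerivWithinAt (fun w => g w i0) (0 : E N →L[ℝ] ℝ) sl z := by
    intro z hz
    have hzX := hsub hz.1
    set L : E N →L[ℝ] ℝ :=
      (EuclideanSpace.proj (𝕜 := ℝ) i0).comp (fderiv ℝ g z) with hL
    have hLval : ∀ w : E N, L w = w i0 * dentry g z i0 i0 := by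
      intro w
      have : L w = fderiv ℝ g z w i0 := rfl
      rw [this, row_zero_apply hN (htri z hzX)]
    have hfull : HasFDerivWithinAt (fun w => g w i0) L sl z :=
      (coordZero_hasFDerivAt hN (hdiff z hzX)).hasFDerivWithinAt
    have hLlin : HasFDerivWithinAt (fun w : E N => L w) L sl z :=
      L.hasFDerivAt.hasFDerivWithinAt
    have hLzero : HasFDerivWithinAt (fun w : E N => L w) (0 : E N →L[ℝ] ℝ) sl z := by
      have hconst : HasFDerivWithinAt (fun _ : E N => c * dentry g z i0 i0)
          (0 : E N →L[ℝ] ℝ) sl z := hasFDerivWithinAt_const _ _ _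
      refine hconst.congr ?_ ?_
      · intro w hw
        show L w = c * dentry g z i0 i0
        rw [hLval w, hw.2]
      · show L z = c * dentry g z i0 i0
        rw [hLval z, hz.2]
    have hdiffLin : HasFDerivWithinAt (fun w => g w i0 - L w) (L - L) sl z :=
      hfull.sub hLlin
    have : HasFDerivWithinAt (fun w => (g w i0 - L w) + L w) ((L - L) + 0) sl z :=
      hdiffLin.add hLzero
    have he1 : (fun w => (g w i0 - L w) + L w) = fun w => g w i0 := by
      funext w; ring
    have he2 : ((L - L) + 0 : E N →L[ℝ] ℝ) = 0 := by simp
    rw [he1, he2] at this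
    exact this
  have hbound : ∀ z ∈ sl, ‖(0 : E N →L[ℝ] ℝ)‖ ≤ (0:ℝ) := by simp
  have hy'sl : y' ∈ sl := ⟨hy', rfl⟩
  have hysl : y ∈ sl := ⟨hy, hc⟩
  have := hslconv.norm_image_sub_le_of_norm_hasFDerivWithin_le key hbound hysl hy'sl
  have h0 : ‖g y' i0 - g y i0‖ ≤ 0 := by simpa using this
  have := norm_le_zero_iff.1 h0
  have := sub_eq_zero.1 this
  exact this.symm

lemma coordZero_lipschitz {δ : ℝ} (hδ : 0 ≤ δ) {γ : ℝ} (hγ0 : 0 ≤ γ)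
    (hdiff : ∀ z ∈ X', DifferentiableAt ℝ g z)
    (htri : ∀ z ∈ X', ∀ j : Fin N, j ≠ ⟨0, hN⟩ → dentry g z ⟨0, hN⟩ j = 0)
    (hsub : cubeE N δ ⊆ X')
    (hbd : ∀ z ∈ cubeE N δ, |dentry g z ⟨0, hN⟩ ⟨0, hN⟩| ≤ γ)
    {y y' : E N} (hy : y ∈ cubeE N δ) (hy' : y' ∈ cubeE N δ) :
    |g y ⟨0, hN⟩ - g y' ⟨0, hN⟩| ≤ γ * |y ⟨0, hN⟩ - y' ⟨0, hN⟩| := by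
  set i0 : Fin N := ⟨0, hN⟩
  set yh : E N := y + EuclideanSpace.single i0 (y' i0 - y i0) with hyh
  have hyhcoord : ∀ i, yh i = if i = i0 then y' i0 else y i := by
    intro i
    have h1 : yh i = y i + EuclideanSpace.single i0 (y' i0 - y i0) i := rfl
    rw [h1, EuclideanSpace.single_apply]
    by_cases h : i = i0
    · subst h; simp
    · rw [if_neg h, add_zero, if_neg h]
  have hyhmem : yh ∈ cubeE N δ := by
    intro i
    rw [hyhcoord i]
    by_cases h : i = i0
    · simp only [h, if_pos rfl]; exact hy' i0
    · simp only [if_neg h]; exact hy i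
  have heq : g yh i0 = g y' i0 := by
    apply coordZero_const_on_slice hN hdiff htri (convex_cubeE δ) hsub hyhmem hy'
    rw [hyhcoord i0, if_pos rfl]
  have hsegment : |g y i0 - g yh i0| ≤ γ * ‖y - yh‖ := by
    have key : ∀ z ∈ cubeE N δ, HasFDerivWithinAt (fun w => g w i0)
        ((EuclideanSpace.proj (𝕜 := ℝ) i0).comp (fderiv ℝ g z)) (cubeE N δ) z :=
      fun z hz => (coordZero_hasFDerivAt hN (hdiff z (hsub hz))).hasFDerivWithinAt
    have hbound : ∀ z ∈ cubeE N δ,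
        ‖(EuclideanSpace.proj (𝕜 := ℝ) i0).comp (fderiv ℝ g z)‖ ≤ γ := by
      intro z hz
      apply ContinuousLinearMap.opNorm_le_bound _ hγ0
      intro w
      have h1 : ((EuclideanSpace.proj (𝕜 := ℝ) i0).comp (fderiv ℝ g z)) w
          = fderiv ℝ g z w i0 := rfl
      rw [h1, row_zero_apply hN (htri z (hsub hz))]
      rw [Real.norm_eq_abs, abs_mul]
      calc |w i0| * |dentry g z i0 i0| ≤ ‖w‖ * γ := by
            apply mul_le_mul (abs_coord_le_norm w i0) (hbd z hz) (abs_nonneg _)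
              (norm_nonneg _)
        _ = γ * ‖w‖ := by ring
    have := (convex_cubeE δ).norm_image_sub_le_of_norm_hasFDerivWithin_le key hbound
      hyhmem hy
    simpa [Real.norm_eq_abs] using this
  have hnorm : ‖y - yh‖ = |y i0 - y' i0| := by
    have : y - yh = EuclideanSpace.single i0 (y i0 - y' i0) := by
      ext i
      have h1 : (y - yh) i = y i - yh i := rfl
      rw [h1, hyhcoord i, EuclideanSpace.single_apply]
      by_cases h : i = i0
      · subst h; simp
      · simp [h]
    rw [this, EuclideanSpace.norm_single, Real.norm_eq_abs]
  calc |g y i0 - g y' i0| ≤ |g y i0 - g yh i0| + |g yh i0 - g y' i0| := abs_sub_le _ _ _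
    _ = |g y i0 - g yh i0| := by rw [heq]; simp
    _ ≤ γ * ‖y - yh‖ := hsegment
    _ = γ * |y i0 - y' i0| := by rw [hnorm]

lemma dentry_const_on_slice {δ : ℝ} (hδ : 0 < δ)
    (hdiff : ∀ z ∈ X', DifferentiableAt ℝ g z)
    (htri : ∀ z ∈ X', ∀ j : Fin N, j ≠ ⟨0, hN⟩ → dentry g z ⟨0, hN⟩ j = 0)
    (hsub : cubeE N δ ⊆ X')
    {y y' : E N} (hy : y ∈ cube N) (hy' : y' ∈ cube N) (hc : y ⟨0, hN⟩ = y' ⟨0, hN⟩) :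
    dentry g y ⟨0, hN⟩ ⟨0, hN⟩ = dentry g y' ⟨0, hN⟩ ⟨0, hN⟩ := by
  set i0 : Fin N := ⟨0, hN⟩
  set v : E N := EuclideanSpace.single i0 (1:ℝ) with hv
  have hline : ∀ (u : E N), u ∈ cube N → ∀ t : ℝ, |t| ≤ δ → u + t • v ∈ cubeE N δ := by
    intro u hu t ht i
    have h1 : (u + t • v) i = u i + t * (EuclideanSpace.single i0 (1:ℝ)) i := rfl
    rw [h1, EuclideanSpace.single_apply]
    by_cases h : i = i0
    · rw [if_pos h, mul_one]
      have := hu i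
      rw [abs_le] at ht
      constructor <;> [linarith [this.1, ht.1]; linarith [this.2, ht.2]]
    · rw [if_neg h, mul_zero, add_zero]
      have := hu i
      constructor <;> [linarith [this.1]; linarith [this.2, hδ.le]]
  have hcoord0 : ∀ (u : E N) (t : ℝ), (u + t • v) i0 = u i0 + t := by
    intro u t
    have h1 : (u + t • v) i0 = u i0 + t * (EuclideanSpace.single i0 (1:ℝ)) i0 := rfl
    rw [h1, EuclideanSpace.single_apply, if_pos rfl, mul_one]
  have hδAt : ∀ (u : E N), u ∈ cube N →
      HasDerivAt (fun t : ℝ => g (u + t • v) i0) (dentry g u i0 i0) 0 := by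
    intro u hu
    have humem : u + (0:ℝ) • v ∈ cubeE N δ := hline u hu 0 (by simp [hδ.le])
    have h0 : u + (0:ℝ) • v = u := by simp
    have huX : u ∈ X' := hsub (h0 ▸ humem)
    have hF : HasFDerivAt (fun w => g w i0)
        ((EuclideanSpace.proj (𝕜 := ℝ) i0).comp (fderiv ℝ g u)) u :=
      coordZero_hasFDerivAt hN (hdiff u huX)
    have hcurve : HasDerivAt (fun t : ℝ => u + t • v) v 0 := by
      simpa using ((hasDerivAt_id (0:ℝ)).smul_const v).const_add u
    have hF' : HasFDerivAt (fun w => g w i0)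
        ((EuclideanSpace.proj (𝕜 := ℝ) i0).comp (fderiv ℝ g u)) (u + (0:ℝ) • v) := by
      rw [h0]; exact hF
    exact hF'.comp_hasDerivAt 0 hcurve
  have hEq : (fun t : ℝ => g (y + t • v) i0) =ᶠ[𝓝 (0:ℝ)] (fun t => g (y' + t • v) i0) := by
    have hball : Metric.ball (0:ℝ) δ ∈ 𝓝 (0:ℝ) := Metric.ball_mem_nhds 0 hδ
    refine Filter.eventuallyEq_of_mem hball ?_
    intro t ht
    have ht' : |t| ≤ δ := le_of_lt (by simpa [Real.dist_eq] using ht)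
    apply coordZero_const_on_slice hN hdiff htri (convex_cubeE δ) hsub
      (hline y hy t ht') (hline y' hy' t ht')
    rw [hcoord0 y t, hcoord0 y' t, hc]
  have hd1 := hδAt y hy
  have hd2 := hδAt y' hy'
  exact hd1.unique (hd2.congr_of_eventuallyEq hEq)

end CoordZero

lemma htri_of_unip (hN : 0 < N) {f : E d → (ℕ → A) → E N → E N} {P' : Set (E d)}
    {X' : Set (E N)} (hU : UnipOn hN f P' X') {p : E d} (hp : p ∈ P') (𝔟 : ℕ → A) :
    ∀ z ∈ X', ∀ j : Fin N, j ≠ ⟨0, hN⟩ → dentry (f p 𝔟) z ⟨0, hN⟩ j = 0 := by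
  intro z hz j hj
  apply (hU p hp 𝔟 z hz).1
  show (0 : ℕ) < (j : ℕ)
  rcases Nat.eq_zero_or_pos (j : ℕ) with h | h
  · exact absurd (Fin.ext h : j = ⟨0, hN⟩) hj
  · exact h

lemma consF_eta (𝔟 : ℕ → A) : consF (𝔟 0) (fun n => 𝔟 (n+1)) = 𝔟 := by
  funext n
  cases n <;> rfl

lemma modulus [Fintype A] (hA : Nonempty A) (hN : 0 < N) {r : ℕ∞} (hr : 1 ≤ r)
    (S : SkewFamily A N d r) (hU : UnipOn hN S.f S.P' S.X') :
    ∀ ε₀ > (0:ℝ), ∃ δ > (0:ℝ), ∀ p ∈ closure (cubeO d), ∀ (𝔟 : ℕ → A),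
      ∀ y ∈ cube N, ∀ y' ∈ cube N, |y ⟨0,hN⟩ - y' ⟨0,hN⟩| ≤ δ →
      |dentry (S.f p 𝔟) y ⟨0,hN⟩ ⟨0,hN⟩ - dentry (S.f p 𝔟) y' ⟨0,hN⟩ ⟨0,hN⟩| ≤ ε₀ := by
  intro ε₀ hε₀
  set i0 : Fin N := ⟨0, hN⟩
  obtain ⟨C, hC, θH, hθH, hH⟩ := S.holder1
  obtain ⟨δ2, hδ2, hδ2sub⟩ := exists_cubeE_subset S.X'_open S.X_subset
  obtain ⟨q, hq⟩ : ∃ q : ℕ, C * θH ^ q < ε₀ / 4 := by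
    obtain ⟨q, hq⟩ := exists_pow_lt_of_lt_one (show (0:ℝ) < ε₀/(4*C) by positivity) hθH.2
    refine ⟨q, ?_⟩
    calc C * θH ^ q < C * (ε₀/(4*C)) := by exact mul_lt_mul_of_pos_left hq hC
      _ = ε₀ / 4 := by field_simp
  have a₀ : A := Classical.arbitrary A
  set rep : (Fin q → A) → (ℕ → A) := fun u i => if h : i < q then u ⟨i, h⟩ else a₀ with hrep
  have hcont : ∀ 𝔠 : ℕ → A, ContinuousOn
      (fun pc : E d × E N => dentry (S.f pc.1 𝔠) pc.2 i0 i0) (S.P' ×ˢ S.X') := by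
    intro 𝔠
    have hopen : IsOpen (S.P' ×ˢ S.X') := S.P'_open.prod S.X'_open
    have hsm := S.smooth 𝔠
    have hfd : ContinuousOn (fderiv ℝ (fun q : E d × E N => S.f q.1 𝔠 q.2)) (S.P' ×ˢ S.X') := by
      have h1 := hsm.continuousOn_fderivWithin hopen.uniqueDiffOn (by exact_mod_cast hr)
      refine h1.congr ?_
      intro z hz
      exact (fderivWithin_of_isOpen hopen hz).symm
    have heval : ∀ pc ∈ S.P' ×ˢ S.X', dentry (S.f pc.1 𝔠) pc.2 i0 i0
        = (fderiv ℝ (fun q : E d × E N => S.f q.1 𝔠 q.2) pc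
            ((0 : E d), EuclideanSpace.single i0 (1:ℝ))) i0 := by
      intro pc hpc
      have := slice_fderiv_apply S.P'_open S.X'_open hsm hr hpc.1 hpc.2
        (EuclideanSpace.single i0 (1:ℝ))
      show fderiv ℝ (fun y => S.f pc.1 𝔠 y) pc.2 (EuclideanSpace.single i0 (1:ℝ)) i0 = _
      rw [this]
    refine ContinuousOn.congr ?_ heval
    have h2 : Continuous (fun L : (E d × E N) →L[ℝ] E N =>
        (L ((0 : E d), EuclideanSpace.single i0 (1:ℝ))) i0) := by
      have h3 : Continuous (fun L : (E d × E N) →L[ℝ] E N =>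
          L ((0 : E d), EuclideanSpace.single i0 (1:ℝ))) :=
        (ContinuousLinearMap.apply ℝ (E N)
          (((0 : E d), EuclideanSpace.single i0 (1:ℝ)))).continuous
      exact (continuous_apply i0).comp
        ((EuclideanSpace.equiv (Fin N) ℝ).continuous.comp h3)
    exact h2.comp_continuousOn hfd
  set K : Set (E d × E N) := closure (cubeO d) ×ˢ cube N with hK
  have hKsub : K ⊆ S.P' ×ˢ S.X' := Set.prod_mono S.P_subset S.X_subset
  have hKcomp : IsCompact K := by
    refine IsCompact.prod ?_ isCompact_cube
    exact isCompact_cube.of_isClosed_subset isClosed_closure closure_cubeO_subset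
  have hUC : ∀ 𝔠 : ℕ → A, ∃ δ > (0:ℝ), ∀ z ∈ K, ∀ z' ∈ K, dist z z' < δ →
      dist (dentry (S.f z.1 𝔠) z.2 i0 i0) (dentry (S.f z'.1 𝔠) z'.2 i0 i0) < ε₀/2 := by
    intro 𝔠
    have := hKcomp.uniformContinuousOn_of_continuous (((hcont 𝔠)).mono hKsub)
    rw [Metric.uniformContinuousOn_iff] at this
    obtain ⟨δ, hδ, h⟩ := this (ε₀/2) (by linarith)
    exact ⟨δ, hδ, fun z hz z' hz' hd => h z hz z' hz' hd⟩
  choose δf hδfpos hδf using fun u : Fin q → A => hUC (rep u)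
  have hne : (Finset.univ : Finset (Fin q → A)).Nonempty := Finset.univ_nonempty
  set δmin : ℝ := Finset.univ.inf' hne δf with hδmin
  have hδminpos : 0 < δmin := by
    rw [hδmin, Finset.lt_inf'_iff]
    exact fun u _ => hδfpos u
  refine ⟨δmin / 2, by positivity, ?_⟩
  intro p hp 𝔟 y hy y' hy' hclose
  have hpP : p ∈ S.P' := S.P_subset hp
  have hdiffX : ∀ z ∈ S.X', DifferentiableAt ℝ (S.f p 𝔟) z := fun z hz =>
    slice_differentiableAt S.P'_open S.X'_open (S.smooth 𝔟) hr hpP hz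
  set yh : E N := y' + EuclideanSpace.single i0 (y i0 - y' i0) with hyh
  have hyhcoord : ∀ i, yh i = if i = i0 then y i0 else y' i := by
    intro i
    have h1 : yh i = y' i + EuclideanSpace.single i0 (y i0 - y' i0) i := rfl
    rw [h1, EuclideanSpace.single_apply]
    by_cases h : i = i0
    · subst h; simp
    · rw [if_neg h, add_zero, if_neg h]
  have hyhmem : yh ∈ cube N := by
    intro i
    rw [hyhcoord i]
    by_cases h : i = i0
    · rw [if_pos h]; exact hy i0
    · rw [if_neg h]; exact hy' i
  have hslice : dentry (S.f p 𝔟) y i0 i0 = dentry (S.f p 𝔟) yh i0 i0 := by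
    apply dentry_const_on_slice hN hδ2 hdiffX (htri_of_unip hN hU hpP 𝔟) hδ2sub hy hyhmem
    rw [hyhcoord i0, if_pos rfl]
  have hdistyh : dist yh y' ≤ |y i0 - y' i0| := by
    have h1 : yh - y' = EuclideanSpace.single i0 (y i0 - y' i0) := by
      ext i
      have h2 : (yh - y') i = yh i - y' i := rfl
      rw [h2, hyhcoord i, EuclideanSpace.single_apply]
      by_cases h : i = i0
      · subst h; simp
      · rw [if_neg h, if_neg h, sub_self]
    rw [dist_eq_norm, h1, EuclideanSpace.norm_single, Real.norm_eq_abs]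
  set u : Fin q → A := fun i => 𝔟 i with hu
  have hagree : ∀ i < q, 𝔟 i = rep u i := by
    intro i hi
    rw [hrep]
    simp only [hi, dif_pos]
    rfl
  have hswap : ∀ z ∈ cube N, |dentry (S.f p 𝔟) z i0 i0 - dentry (S.f p (rep u)) z i0 i0|
      ≤ C * θH ^ q := by
    intro z hz
    have hzX : z ∈ S.X' := S.X_subset hz
    refine (dentry_sub_le i0 i0).trans ?_
    exact hH p hpP 𝔟 (rep u) q hagree z hzX
  have hmid : |dentry (S.f p (rep u)) yh i0 i0 - dentry (S.f p (rep u)) y' i0 i0| < ε₀/2 := by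
    have hz : ((p, yh) : E d × E N) ∈ K := ⟨hp, hyhmem⟩
    have hz' : ((p, y') : E d × E N) ∈ K := ⟨hp, hy'⟩
    have hd : dist ((p, yh) : E d × E N) (p, y') < δf u := by
      rw [Prod.dist_eq]
      have : dist p p = 0 := dist_self p
      rw [this]
      have h2 : dist yh y' < δf u := by
        refine lt_of_le_of_lt (hdistyh.trans hclose) ?_
        calc δmin / 2 < δmin := by linarith
          _ ≤ δf u := Finset.inf'_le _ (Finset.mem_univ u)
      rw [max_lt_iff]
      exact ⟨hδfpos u, h2⟩
    have := hδf u (p, yh) hz (p, y') hz' hd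
    rwa [Real.dist_eq] at this
  calc |dentry (S.f p 𝔟) y i0 i0 - dentry (S.f p 𝔟) y' i0 i0|
      = |dentry (S.f p 𝔟) yh i0 i0 - dentry (S.f p 𝔟) y' i0 i0| := by rw [hslice]
    _ ≤ |dentry (S.f p 𝔟) yh i0 i0 - dentry (S.f p (rep u)) yh i0 i0|
        + |dentry (S.f p (rep u)) yh i0 i0 - dentry (S.f p (rep u)) y' i0 i0|
        + |dentry (S.f p (rep u)) y' i0 i0 - dentry (S.f p 𝔟) y' i0 i0| := by
          have t1 := abs_sub_le (dentry (S.f p 𝔟) yh i0 i0)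
            (dentry (S.f p (rep u)) y' i0 i0) (dentry (S.f p 𝔟) y' i0 i0)
          have t2 := abs_sub_le (dentry (S.f p 𝔟) yh i0 i0)
            (dentry (S.f p (rep u)) yh i0 i0) (dentry (S.f p (rep u)) y' i0 i0)
          linarith
    _ ≤ C * θH ^ q + ε₀/2 + C * θH ^ q := by
        have h1 := hswap yh hyhmem
        have h2 := hswap y' hy'
        rw [abs_sub_comm] at h2
        linarith [hmid.le]
    _ ≤ ε₀ := by linarith [hq]

section PsiLemmas
variable (hN : 0 < N) {h : E d → (ℕ → A) → E N → E N} {p : E d}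

lemma psi_mem (Hinto : ∀ 𝔟 : ℕ → A, ∀ x ∈ cube N, h p 𝔟 x ∈ cube N) :
    ∀ (w : List A) (𝔟 : ℕ → A), ∀ x ∈ cube N, psi h p w 𝔟 x ∈ cube N
  | [], _, _, hx => hx
  | a :: w, 𝔟, x, hx => Hinto _ _ (psi_mem Hinto w (consF a 𝔟) x hx)

lemma psi_diffAt (Hinto : ∀ 𝔟 : ℕ → A, ∀ x ∈ cube N, h p 𝔟 x ∈ cube N)
    (Hdiff : ∀ 𝔟 : ℕ → A, ∀ z ∈ cube N, DifferentiableAt ℝ (h p 𝔟) z) :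
    ∀ (w : List A) (𝔟 : ℕ → A), ∀ x ∈ cube N, DifferentiableAt ℝ (psi h p w 𝔟) x
  | [], _, _, _ => differentiableAt_id
  | a :: w, 𝔟, x, hx =>
    (Hdiff (consF a 𝔟) _ (psi_mem Hinto w (consF a 𝔟) x hx)).comp x
      (psi_diffAt Hinto Hdiff w (consF a 𝔟) x hx)

lemma lam_nil (𝔟 : ℕ → A) (x : E N) : lam hN h p 𝔟 [] x = 1 := by
  unfold lam dentry
  show |fderiv ℝ (id : E N → E N) x (EuclideanSpace.single ⟨0,hN⟩ 1) ⟨0,hN⟩| = 1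
  rw [fderiv_id]
  have : (ContinuousLinearMap.id ℝ (E N)) (EuclideanSpace.single ⟨0,hN⟩ (1:ℝ))
      = EuclideanSpace.single ⟨0,hN⟩ (1:ℝ) := rfl
  rw [this, EuclideanSpace.single_apply, if_pos rfl]
  norm_num

lemma lam_cons (Hinto : ∀ 𝔟 : ℕ → A, ∀ x ∈ cube N, h p 𝔟 x ∈ cube N)
    (Hdiff : ∀ 𝔟 : ℕ → A, ∀ z ∈ cube N, DifferentiableAt ℝ (h p 𝔟) z)
    (Htri : ∀ 𝔟 : ℕ → A, ∀ z ∈ cube N, ∀ j : Fin N, j ≠ ⟨0,hN⟩ →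
      dentry (h p 𝔟) z ⟨0,hN⟩ j = 0)
    (w : List A) (a : A) (𝔟 : ℕ → A) {x : E N} (hx : x ∈ cube N) :
    lam hN h p 𝔟 (a :: w) x
      = |dentry (h p (consF a 𝔟)) (psi h p w (consF a 𝔟) x) ⟨0,hN⟩ ⟨0,hN⟩|
        * lam hN h p (consF a 𝔟) w x := by
  have hy := psi_mem Hinto w (consF a 𝔟) x hx
  unfold lam
  rw [show psi h p (a :: w) 𝔟 = h p (consF a 𝔟) ∘ psi h p w (consF a 𝔟) from rfl]
  rw [dentry_comp hN (Hdiff _ _ hy) (psi_diffAt Hinto Hdiff w (consF a 𝔟) x hx)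
    (Htri _ _ hy), abs_mul]

end PsiLemmas

end AuxPoisson

/-- Lemma (distortion w.r.t. perturbations). -/
theorem lemma_poisson {A : Type} [Fintype A] {N d : ℕ} {r : ℕ∞}
    (hA : 2 ≤ Fintype.card A) (hN : 0 < N) (hd : 0 < d) (hr : 2 ≤ r)
    (S : SkewFamily A N d r)
    (hU : UnipOn hN S.f S.P' S.X')
    (γ' γ : ℝ) (hγ : GammaBounds hN S.f γ' γ) :
    ∀ ε' : ℝ, 1 < ε' → ∃ D₄ > (1:ℝ), ∃ θ₀ > (0:ℝ), ∀ θ : ℝ, 0 < θ → θ ≤ θ₀ →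
      ∀ τ : ℕ, 0 < τ → ∀ Ft : ParamPerturb hN S θ τ, ∀ t ∈ cubeO τ,
      ∀ (𝔞 : ℕ → A), ∀ p ∈ closure (cubeO d), ∀ w : List A,
        Lam hN S.f p 𝔞 w ^ ε' / D₄ < Lam hN (Ft.g t) p 𝔞 w ∧
        Lam hN (Ft.g t) p 𝔞 w < D₄ * Lam hN S.f p 𝔞 w ^ (1 / ε') := by
  obtain ⟨hγ'pos, hγ'γ, hγ1, hbd⟩ := hγ
  have hγpos : (0:ℝ) < γ := lt_trans hγ'pos hγ'γ
  have hγ1' : γ < 1 := hγ1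
  have hr1 : (1 : ℕ∞) ≤ r := le_trans (by norm_num) hr
  have hAne : Nonempty A := Fintype.card_pos_iff.mp (by omega)
  intro ε' hε'
  have hε'pos : (0:ℝ) < ε' := by linarith
  set a : ℝ := γ ^ (1/ε' - 1) with ha_def
  set b : ℝ := γ ^ (ε' - 1) with hb_def
  have ha1 : 1 < a := by
    rw [ha_def, Real.one_lt_rpow_iff_of_pos hγpos]
    right
    refine ⟨hγ1', ?_⟩
    have : 1/ε' < 1 := by rw [div_lt_one hε'pos]; linarith
    linarith
  have hb1 : b < 1 := Real.rpow_lt_one hγpos.le hγ1' (by linarith)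
  have hbpos : 0 < b := Real.rpow_pos_of_pos hγpos _
  have hapos : (0:ℝ) < a := by linarith
  set ε₀ : ℝ := γ' * min (a - 1) (1 - b) / 2 with hε₀_def
  have hminpos : 0 < min (a - 1) (1 - b) := lt_min (by linarith) (by linarith)
  have hε₀pos : 0 < ε₀ := by
    rw [hε₀_def]
    exact div_pos (mul_pos hγ'pos hminpos) two_pos
  obtain ⟨δ, hδpos, hmod⟩ := modulus hAne hN hr1 S hU ε₀ hε₀pos
  have h1γ : (0:ℝ) < 1 - γ := by linarith
  refine ⟨2, one_lt_two, min ε₀ (δ * (1 - γ)), lt_min hε₀pos (mul_pos hδpos h1γ), ?_⟩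
  intro θ hθpos hθle τ hτ Ft t ht 𝔞 p hp w
  have hθε₀ : θ ≤ ε₀ := hθle.trans (min_le_left _ _)
  have hθδ : θ / (1 - γ) ≤ δ := by
    rw [div_le_iff₀ h1γ]
    exact hθle.trans (min_le_right _ _)
  have hpP' : p ∈ S.P' := S.P_subset hp
  -- f-side facts
  have Hdiff_fX : ∀ 𝔟 : ℕ → A, ∀ z ∈ S.X', DifferentiableAt ℝ (S.f p 𝔟) z := fun 𝔟 z hz =>
    slice_differentiableAt S.P'_open S.X'_open (S.smooth 𝔟) hr1 hpP' hz
  have Hdiff_f : ∀ 𝔟 : ℕ → A, ∀ z ∈ cube N, DifferentiableAt ℝ (S.f p 𝔟) z :=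
    fun 𝔟 z hz => Hdiff_fX 𝔟 z (S.X_subset hz)
  have Htri_fX : ∀ 𝔟 : ℕ → A, ∀ z ∈ S.X', ∀ j : Fin N, j ≠ ⟨0,hN⟩ →
      dentry (S.f p 𝔟) z ⟨0,hN⟩ j = 0 := fun 𝔟 => htri_of_unip hN hU hpP' 𝔟
  have Htri_f : ∀ 𝔟 : ℕ → A, ∀ z ∈ cube N, ∀ j : Fin N, j ≠ ⟨0,hN⟩ →
      dentry (S.f p 𝔟) z ⟨0,hN⟩ j = 0 := fun 𝔟 z hz => Htri_fX 𝔟 z (S.X_subset hz)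
  have Hinto_f : ∀ 𝔟 : ℕ → A, ∀ x ∈ cube N, S.f p 𝔟 x ∈ cube N := fun 𝔟 x hx =>
    S.into 𝔟 p hpP' ⟨x, S.X_subset hx, rfl⟩
  have hletter_f : ∀ 𝔟 : ℕ → A, ∀ x ∈ cube N,
      γ' < |dentry (S.f p 𝔟) x ⟨0,hN⟩ ⟨0,hN⟩| ∧ |dentry (S.f p 𝔟) x ⟨0,hN⟩ ⟨0,hN⟩| < γ := by
    intro 𝔟 x hx
    have h1 := hbd p hp (fun n => 𝔟 (n+1)) (𝔟 0) x hx
    have h2 : lam hN S.f p (fun n => 𝔟 (n+1)) [𝔟 0] x = |dentry (S.f p 𝔟) x ⟨0,hN⟩ ⟨0,hN⟩| := by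
      unfold lam
      rw [show psi S.f p [𝔟 0] (fun n => 𝔟 (n+1))
          = S.f p (consF (𝔟 0) fun n => 𝔟 (n+1)) from rfl, consF_eta]
    rw [h2] at h1
    exact h1
  -- g-side facts
  have hgC : ∀ 𝔟 : ℕ → A, ContDiffOn ℝ r (fun q : E d × E N => Ft.g t q.1 𝔟 q.2)
      (S.P' ×ˢ S.X') := Ft.smooth t ht
  have Hdiff_g : ∀ 𝔟 : ℕ → A, ∀ z ∈ cube N, DifferentiableAt ℝ (Ft.g t p 𝔟) z :=
    fun 𝔟 z hz =>
      slice_differentiableAt S.P'_open S.X'_open (hgC 𝔟) hr1 hpP' (S.X_subset hz)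
  have Htri_g : ∀ 𝔟 : ℕ → A, ∀ z ∈ cube N, ∀ j : Fin N, j ≠ ⟨0,hN⟩ →
      dentry (Ft.g t p 𝔟) z ⟨0,hN⟩ j = 0 := fun 𝔟 z hz =>
    htri_of_unip hN (Ft.unip t ht) hpP' 𝔟 z (S.X_subset hz)
  have Hinto_g : ∀ 𝔟 : ℕ → A, ∀ x ∈ cube N, Ft.g t p 𝔟 x ∈ cube N := fun 𝔟 x hx =>
    Ft.into t ht 𝔟 p hpP' ⟨x, S.X_subset hx, rfl⟩
  -- closeness between f and g
  obtain ⟨θ', hθ'lt, hclose⟩ := Ft.close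
  have hval_close : ∀ 𝔟 : ℕ → A, ∀ x ∈ cube N,
      |(S.f p 𝔟 x) ⟨0,hN⟩ - (Ft.g t p 𝔟 x) ⟨0,hN⟩| ≤ θ := by
    intro 𝔟 x hx
    have h0 := hclose t ht 𝔟 0 (by simp) p hpP' x (S.X_subset hx)
    rw [norm_iteratedFDeriv_zero] at h0
    have h1 : |(S.f p 𝔟 x - Ft.g t p 𝔟 x) ⟨0,hN⟩| ≤ ‖S.f p 𝔟 x - Ft.g t p 𝔟 x‖ :=
      abs_coord_le_norm _ _
    have h2 : (S.f p 𝔟 x - Ft.g t p 𝔟 x) ⟨0,hN⟩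
        = (S.f p 𝔟 x) ⟨0,hN⟩ - (Ft.g t p 𝔟 x) ⟨0,hN⟩ := rfl
    rw [h2] at h1
    have h3 : ‖S.f p 𝔟 x - Ft.g t p 𝔟 x‖ ≤ θ' := h0
    linarith [hθ'lt.le]
  have hdentry_close : ∀ 𝔟 : ℕ → A, ∀ x ∈ cube N,
      |dentry (S.f p 𝔟) x ⟨0,hN⟩ ⟨0,hN⟩ - dentry (Ft.g t p 𝔟) x ⟨0,hN⟩ ⟨0,hN⟩| ≤ θ := by
    intro 𝔟 x hx
    have hxX := S.X_subset hx
    set D : E d × E N → E N := fun q => S.f q.1 𝔟 q.2 - Ft.g t q.1 𝔟 q.2 with hD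
    have hDsm : ContDiffOn ℝ r D (S.P' ×ˢ S.X') := (S.smooth 𝔟).sub (hgC 𝔟)
    have h1 := hclose t ht 𝔟 1 (le_trans (by norm_num) hr) p hpP' x hxX
    have h2 : ‖fderiv ℝ D (p, x)‖ ≤ θ' := by
      have e1 := norm_iteratedFDeriv_fderiv (𝕜 := ℝ) (f := D) (x := ((p,x) : E d × E N))
        (n := 0)
      rw [norm_iteratedFDeriv_zero] at e1
      rw [e1]
      exact h1
    have hds : fderiv ℝ (fun y => D (p, y)) x
        = fderiv ℝ (S.f p 𝔟) x - fderiv ℝ (Ft.g t p 𝔟) x := by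
      apply fderiv_sub (Hdiff_fX 𝔟 x hxX) (Hdiff_g 𝔟 x hx)
    have hsD := slice_fderiv_apply S.P'_open S.X'_open hDsm hr1 hpP' hxX
      (EuclideanSpace.single ⟨0,hN⟩ (1:ℝ))
    have h3 : dentry (S.f p 𝔟) x ⟨0,hN⟩ ⟨0,hN⟩ - dentry (Ft.g t p 𝔟) x ⟨0,hN⟩ ⟨0,hN⟩
        = (fderiv ℝ D (p,x) ((0 : E d), EuclideanSpace.single ⟨0,hN⟩ (1:ℝ))) ⟨0,hN⟩ := by
      rw [← hsD, hds]
      rw [ContinuousLinearMap.sub_apply]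
      rfl
    rw [h3]
    have h4 : |(fderiv ℝ D (p,x) ((0 : E d), EuclideanSpace.single ⟨0,hN⟩ (1:ℝ))) ⟨0,hN⟩|
        ≤ ‖fderiv ℝ D (p,x)‖ := by
      refine (abs_coord_le_norm _ _).trans ?_
      refine (ContinuousLinearMap.le_opNorm _ _).trans ?_
      have h5 : ‖((0 : E d), EuclideanSpace.single (⟨0,hN⟩ : Fin N) (1:ℝ))‖ = 1 := by
        rw [Prod.norm_def]
        simp [EuclideanSpace.norm_single]
      rw [h5, mul_one]
    linarith [hθ'lt.le]
  -- Lipschitz in the first coordinate for f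
  have hlip_f : ∀ 𝔟 : ℕ → A, ∀ y ∈ cube N, ∀ y' ∈ cube N,
      |(S.f p 𝔟 y) ⟨0,hN⟩ - (S.f p 𝔟 y') ⟨0,hN⟩| ≤ γ * |y ⟨0,hN⟩ - y' ⟨0,hN⟩| := by
    intro 𝔟 y hy y' hy'
    have hsub0 : cubeE N 0 ⊆ S.X' := by rw [cubeE_zero]; exact S.X_subset
    have hbd0 : ∀ z ∈ cubeE N 0, |dentry (S.f p 𝔟) z ⟨0,hN⟩ ⟨0,hN⟩| ≤ γ := by
      rw [cubeE_zero]
      exact fun z hz => (hletter_f 𝔟 z hz).2.le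
    have hy0 : y ∈ cubeE N 0 := by rw [cubeE_zero]; exact hy
    have hy'0 : y' ∈ cubeE N 0 := by rw [cubeE_zero]; exact hy'
    exact coordZero_lipschitz hN le_rfl hγpos.le (Hdiff_fX 𝔟) (Htri_fX 𝔟) hsub0 hbd0 hy0 hy'0
  -- bounds on lam for f
  have hlamf_bounds : ∀ (w : List A) (𝔟 : ℕ → A), ∀ x ∈ cube N,
      γ' ^ w.length ≤ lam hN S.f p 𝔟 w x ∧ lam hN S.f p 𝔟 w x ≤ γ ^ w.length := by
    intro w
    induction w with
    | nil =>
      intro 𝔟 x hx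
      rw [lam_nil hN]
      simp
    | cons aL w ih =>
      intro 𝔟 x hx
      rw [lam_cons hN Hinto_f Hdiff_f Htri_f w aL 𝔟 hx]
      have hy := psi_mem Hinto_f w (consF aL 𝔟) x hx
      have hl := hletter_f (consF aL 𝔟) _ hy
      have hw := ih (consF aL 𝔟) x hx
      constructor
      · calc γ' ^ (aL :: w).length = γ' * γ' ^ w.length := by
              rw [List.length_cons, pow_succ]; ring
          _ ≤ _ := mul_le_mul hl.1.le hw.1 (by positivity) (abs_nonneg _)
      · calc |dentry (S.f p (consF aL 𝔟)) (psi S.f p w (consF aL 𝔟) x) ⟨0,hN⟩ ⟨0,hN⟩|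
            * lam hN S.f p (consF aL 𝔟) w x ≤ γ * γ ^ w.length :=
              mul_le_mul hl.2.le hw.2 (abs_nonneg _) hγpos.le
          _ = γ ^ (aL :: w).length := by rw [List.length_cons, pow_succ]; ring
  -- the main induction
  have main : ∀ (w : List A) (𝔟 : ℕ → A), ∀ x ∈ cube N,
      (b ^ w.length * lam hN S.f p 𝔟 w x ≤ lam hN (Ft.g t) p 𝔟 w x ∧
       lam hN (Ft.g t) p 𝔟 w x ≤ a ^ w.length * lam hN S.f p 𝔟 w x) ∧
      |(psi (Ft.g t) p w 𝔟 x) ⟨0,hN⟩ - (psi S.f p w 𝔟 x) ⟨0,hN⟩| ≤ θ / (1 - γ) := by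
    intro w
    induction w with
    | nil =>
      intro 𝔟 x hx
      refine ⟨⟨?_, ?_⟩, ?_⟩
      · rw [lam_nil hN, lam_nil hN]; simp
      · rw [lam_nil hN, lam_nil hN]; simp
      · show |x ⟨0,hN⟩ - x ⟨0,hN⟩| ≤ θ / (1 - γ)
        rw [sub_self, abs_zero]
        exact le_of_lt (div_pos hθpos h1γ)
    | cons aL w ih =>
      intro 𝔟 x hx
      obtain ⟨⟨ihl, ihu⟩, ihorb⟩ := ih (consF aL 𝔟) x hx
      have hyc : psi (Ft.g t) p w (consF aL 𝔟) x ∈ cube N := psi_mem Hinto_g w (consF aL 𝔟) x hx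
      have hzc : psi S.f p w (consF aL 𝔟) x ∈ cube N := psi_mem Hinto_f w (consF aL 𝔟) x hx
      set y := psi (Ft.g t) p w (consF aL 𝔟) x with hy_def
      set z := psi S.f p w (consF aL 𝔟) x with hz_def
      have hA1 : |dentry (Ft.g t p (consF aL 𝔟)) y ⟨0,hN⟩ ⟨0,hN⟩
          - dentry (S.f p (consF aL 𝔟)) y ⟨0,hN⟩ ⟨0,hN⟩| ≤ θ := by
        rw [abs_sub_comm]; exact hdentry_close (consF aL 𝔟) y hyc
      have hA2 : |dentry (S.f p (consF aL 𝔟)) y ⟨0,hN⟩ ⟨0,hN⟩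
          - dentry (S.f p (consF aL 𝔟)) z ⟨0,hN⟩ ⟨0,hN⟩| ≤ ε₀ :=
        hmod p hp (consF aL 𝔟) y hyc z hzc (ihorb.trans hθδ)
      have habs : |(|dentry (Ft.g t p (consF aL 𝔟)) y ⟨0,hN⟩ ⟨0,hN⟩|
          - |dentry (S.f p (consF aL 𝔟)) z ⟨0,hN⟩ ⟨0,hN⟩|)| ≤ θ + ε₀ := by
        calc |(|dentry (Ft.g t p (consF aL 𝔟)) y ⟨0,hN⟩ ⟨0,hN⟩|
              - |dentry (S.f p (consF aL 𝔟)) z ⟨0,hN⟩ ⟨0,hN⟩|)|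
            ≤ |dentry (Ft.g t p (consF aL 𝔟)) y ⟨0,hN⟩ ⟨0,hN⟩
              - dentry (S.f p (consF aL 𝔟)) z ⟨0,hN⟩ ⟨0,hN⟩| :=
              abs_abs_sub_abs_le_abs_sub _ _
          _ ≤ |dentry (Ft.g t p (consF aL 𝔟)) y ⟨0,hN⟩ ⟨0,hN⟩
              - dentry (S.f p (consF aL 𝔟)) y ⟨0,hN⟩ ⟨0,hN⟩|
              + |dentry (S.f p (consF aL 𝔟)) y ⟨0,hN⟩ ⟨0,hN⟩
              - dentry (S.f p (consF aL 𝔟)) z ⟨0,hN⟩ ⟨0,hN⟩| := abs_sub_le _ _ _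
          _ ≤ θ + ε₀ := add_le_add hA1 hA2
      have hlf := hletter_f (consF aL 𝔟) z hzc
      have hεθ : θ + ε₀ ≤ γ' * min (a - 1) (1 - b) := by
        rw [hε₀_def] at hθε₀ ⊢
        linarith
      have hup : |dentry (Ft.g t p (consF aL 𝔟)) y ⟨0,hN⟩ ⟨0,hN⟩|
          ≤ a * |dentry (S.f p (consF aL 𝔟)) z ⟨0,hN⟩ ⟨0,hN⟩| := by
        have h1 := (abs_le.1 habs).2
        have h2 : γ' * min (a-1) (1-b) ≤ γ' * (a-1) :=
          mul_le_mul_of_nonneg_left (min_le_left _ _) hγ'pos.le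
        have h4 : γ' * (a-1) ≤ |dentry (S.f p (consF aL 𝔟)) z ⟨0,hN⟩ ⟨0,hN⟩| * (a-1) :=
          mul_le_mul_of_nonneg_right hlf.1.le (by linarith)
        have h5 : |dentry (S.f p (consF aL 𝔟)) z ⟨0,hN⟩ ⟨0,hN⟩|
            + |dentry (S.f p (consF aL 𝔟)) z ⟨0,hN⟩ ⟨0,hN⟩| * (a-1)
            = a * |dentry (S.f p (consF aL 𝔟)) z ⟨0,hN⟩ ⟨0,hN⟩| := by ring
        linarith
      have hlo : b * |dentry (S.f p (consF aL 𝔟)) z ⟨0,hN⟩ ⟨0,hN⟩|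
          ≤ |dentry (Ft.g t p (consF aL 𝔟)) y ⟨0,hN⟩ ⟨0,hN⟩| := by
        have h1 := (abs_le.1 habs).1
        have h2 : γ' * min (a-1) (1-b) ≤ γ' * (1-b) :=
          mul_le_mul_of_nonneg_left (min_le_right _ _) hγ'pos.le
        have h4 : γ' * (1-b) ≤ |dentry (S.f p (consF aL 𝔟)) z ⟨0,hN⟩ ⟨0,hN⟩| * (1-b) :=
          mul_le_mul_of_nonneg_right hlf.1.le (by linarith)
        have h5 : |dentry (S.f p (consF aL 𝔟)) z ⟨0,hN⟩ ⟨0,hN⟩|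
            - |dentry (S.f p (consF aL 𝔟)) z ⟨0,hN⟩ ⟨0,hN⟩| * (1-b)
            = b * |dentry (S.f p (consF aL 𝔟)) z ⟨0,hN⟩ ⟨0,hN⟩| := by ring
        linarith
      refine ⟨⟨?_, ?_⟩, ?_⟩
      · rw [lam_cons hN Hinto_g Hdiff_g Htri_g w aL 𝔟 hx,
          lam_cons hN Hinto_f Hdiff_f Htri_f w aL 𝔟 hx]
        calc b ^ (aL :: w).length
            * (|dentry (S.f p (consF aL 𝔟)) z ⟨0,hN⟩ ⟨0,hN⟩| * lam hN S.f p (consF aL 𝔟) w x)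
            = (b * |dentry (S.f p (consF aL 𝔟)) z ⟨0,hN⟩ ⟨0,hN⟩|)
              * (b ^ w.length * lam hN S.f p (consF aL 𝔟) w x) := by
              rw [List.length_cons, pow_succ]; ring
          _ ≤ |dentry (Ft.g t p (consF aL 𝔟)) y ⟨0,hN⟩ ⟨0,hN⟩|
              * lam hN (Ft.g t) p (consF aL 𝔟) w x := by
              apply mul_le_mul hlo ihl (mul_nonneg (pow_nonneg hbpos.le _) (abs_nonneg _)) (abs_nonneg _)
      · rw [lam_cons hN Hinto_g Hdiff_g Htri_g w aL 𝔟 hx,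
          lam_cons hN Hinto_f Hdiff_f Htri_f w aL 𝔟 hx]
        calc |dentry (Ft.g t p (consF aL 𝔟)) y ⟨0,hN⟩ ⟨0,hN⟩|
            * lam hN (Ft.g t) p (consF aL 𝔟) w x
            ≤ (a * |dentry (S.f p (consF aL 𝔟)) z ⟨0,hN⟩ ⟨0,hN⟩|)
              * (a ^ w.length * lam hN S.f p (consF aL 𝔟) w x) := by
              apply mul_le_mul hup ihu (abs_nonneg _) (mul_nonneg hapos.le (abs_nonneg _))
          _ = a ^ (aL :: w).length
              * (|dentry (S.f p (consF aL 𝔟)) z ⟨0,hN⟩ ⟨0,hN⟩|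
                * lam hN S.f p (consF aL 𝔟) w x) := by
              rw [List.length_cons, pow_succ]; ring
      · show |(Ft.g t p (consF aL 𝔟) y) ⟨0,hN⟩ - (S.f p (consF aL 𝔟) z) ⟨0,hN⟩| ≤ θ / (1 - γ)
        have s1 : |(Ft.g t p (consF aL 𝔟) y) ⟨0,hN⟩ - (S.f p (consF aL 𝔟) y) ⟨0,hN⟩| ≤ θ := by
          rw [abs_sub_comm]; exact hval_close (consF aL 𝔟) y hyc
        have s2 : |(S.f p (consF aL 𝔟) y) ⟨0,hN⟩ - (S.f p (consF aL 𝔟) z) ⟨0,hN⟩|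
            ≤ γ * |y ⟨0,hN⟩ - z ⟨0,hN⟩| := hlip_f (consF aL 𝔟) y hyc z hzc
        have s3 : γ * |y ⟨0,hN⟩ - z ⟨0,hN⟩| ≤ γ * (θ / (1 - γ)) :=
          mul_le_mul_of_nonneg_left ihorb hγpos.le
        have s4 := abs_sub_le ((Ft.g t p (consF aL 𝔟) y) ⟨0,hN⟩)
          ((S.f p (consF aL 𝔟) y) ⟨0,hN⟩) ((S.f p (consF aL 𝔟) z) ⟨0,hN⟩)
        have heq : θ + γ * (θ / (1 - γ)) = θ / (1 - γ) := by
          have hne : (1 - γ) ≠ 0 := ne_of_gt h1γ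
          field_simp
          ring
        linarith
  -- endgame
  have himg_ne_f : ((fun x => lam hN S.f p 𝔞 w x) '' cube N).Nonempty :=
    ⟨_, ⟨0, zero_mem_cube, rfl⟩⟩
  have himg_ne_g : ((fun x => lam hN (Ft.g t) p 𝔞 w x) '' cube N).Nonempty :=
    ⟨_, ⟨0, zero_mem_cube, rfl⟩⟩
  have hγn1 : γ ^ w.length ≤ 1 := pow_le_one₀ hγpos.le hγ1'.le
  have hbddf : BddAbove ((fun x => lam hN S.f p 𝔞 w x) '' cube N) := by
    refine ⟨1, ?_⟩
    rintro v ⟨x, hx, rfl⟩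
    exact (hlamf_bounds w 𝔞 x hx).2.trans hγn1
  have hbddg : BddAbove ((fun x => lam hN (Ft.g t) p 𝔞 w x) '' cube N) := by
    refine ⟨a ^ w.length, ?_⟩
    rintro v ⟨x, hx, rfl⟩
    calc lam hN (Ft.g t) p 𝔞 w x ≤ a ^ w.length * lam hN S.f p 𝔞 w x :=
          ((main w 𝔞 x hx).1).2
      _ ≤ a ^ w.length * 1 :=
          mul_le_mul_of_nonneg_left ((hlamf_bounds w 𝔞 x hx).2.trans hγn1)
            (pow_nonneg hapos.le _)
      _ = a ^ w.length := mul_one _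
  have hΛf_pos : 0 < Lam hN S.f p 𝔞 w := by
    have h1 : γ' ^ w.length ≤ lam hN S.f p 𝔞 w 0 := (hlamf_bounds w 𝔞 0 zero_mem_cube).1
    have h2 : lam hN S.f p 𝔞 w 0 ≤ Lam hN S.f p 𝔞 w :=
      le_csSup hbddf ⟨0, zero_mem_cube, rfl⟩
    calc (0:ℝ) < γ' ^ w.length := pow_pos hγ'pos _
      _ ≤ _ := h1.trans h2
  have hΛg_pos : 0 < Lam hN (Ft.g t) p 𝔞 w := by
    have h0 : b ^ w.length * lam hN S.f p 𝔞 w 0 ≤ lam hN (Ft.g t) p 𝔞 w 0 :=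
      ((main w 𝔞 0 zero_mem_cube).1).1
    have h1 : 0 < b ^ w.length * lam hN S.f p 𝔞 w 0 := by
      have := (hlamf_bounds w 𝔞 0 zero_mem_cube).1
      have h2 : (0:ℝ) < lam hN S.f p 𝔞 w 0 := lt_of_lt_of_le (pow_pos hγ'pos _) this
      exact mul_pos (pow_pos hbpos _) h2
    have h3 : lam hN (Ft.g t) p 𝔞 w 0 ≤ Lam hN (Ft.g t) p 𝔞 w :=
      le_csSup hbddg ⟨0, zero_mem_cube, rfl⟩
    linarith
  have hexp1 : (0:ℝ) ≤ 1 - 1/ε' := by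
    have : 1/ε' < 1 := by rw [div_lt_one hε'pos]; linarith
    linarith
  have hexp2 : (0:ℝ) ≤ 1/ε' := by positivity
  -- pointwise upper bound
  have hpt_up : ∀ x ∈ cube N, lam hN (Ft.g t) p 𝔞 w x ≤ (Lam hN S.f p 𝔞 w) ^ (1/ε') := by
    intro x hx
    have h1 := ((main w 𝔞 x hx).1).2
    have hf := hlamf_bounds w 𝔞 x hx
    have hfpos : 0 < lam hN S.f p 𝔞 w x := lt_of_lt_of_le (pow_pos hγ'pos _) hf.1
    have key : a ^ w.length * lam hN S.f p 𝔞 w x ≤ (lam hN S.f p 𝔞 w x) ^ (1/ε') := by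
      have e1 : lam hN S.f p 𝔞 w x
          = (lam hN S.f p 𝔞 w x) ^ (1 - 1/ε') * (lam hN S.f p 𝔞 w x) ^ (1/ε') := by
        rw [← Real.rpow_add hfpos]
        norm_num
      have hA : (lam hN S.f p 𝔞 w x) ^ (1 - 1/ε') ≤ (γ ^ w.length) ^ (1 - 1/ε') :=
        Real.rpow_le_rpow hfpos.le hf.2 hexp1
      have hprod : a ^ w.length * (γ ^ w.length : ℝ) ^ (1 - 1/ε') = 1 := by
        rw [ha_def, ← Real.rpow_natCast (γ ^ (1/ε' - 1)) w.length,
          ← Real.rpow_natCast γ w.length, ← Real.rpow_mul hγpos.le,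
          ← Real.rpow_mul hγpos.le, ← Real.rpow_add hγpos,
          show (1/ε' - 1) * (w.length : ℝ) + (w.length : ℝ) * (1 - 1/ε') = 0 by ring,
          Real.rpow_zero]
      have h6 : a ^ w.length * (lam hN S.f p 𝔞 w x) ^ (1 - 1/ε') ≤ 1 := by
        calc a ^ w.length * (lam hN S.f p 𝔞 w x) ^ (1 - 1/ε')
            ≤ a ^ w.length * (γ ^ w.length : ℝ) ^ (1 - 1/ε') :=
              mul_le_mul_of_nonneg_left hA (pow_nonneg hapos.le _)
          _ = 1 := hprod
      calc a ^ w.length * lam hN S.f p 𝔞 w x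
          = (a ^ w.length * (lam hN S.f p 𝔞 w x) ^ (1 - 1/ε'))
            * (lam hN S.f p 𝔞 w x) ^ (1/ε') := by rw [mul_assoc, ← e1]
        _ ≤ 1 * (lam hN S.f p 𝔞 w x) ^ (1/ε') :=
            mul_le_mul_of_nonneg_right h6 (Real.rpow_nonneg hfpos.le _)
        _ = (lam hN S.f p 𝔞 w x) ^ (1/ε') := one_mul _
    have h7 : lam hN S.f p 𝔞 w x ≤ Lam hN S.f p 𝔞 w := le_csSup hbddf ⟨x, hx, rfl⟩
    calc lam hN (Ft.g t) p 𝔞 w x ≤ a ^ w.length * lam hN S.f p 𝔞 w x := h1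
      _ ≤ (lam hN S.f p 𝔞 w x) ^ (1/ε') := key
      _ ≤ (Lam hN S.f p 𝔞 w) ^ (1/ε') := Real.rpow_le_rpow hfpos.le h7 hexp2
  have hΛg_le : Lam hN (Ft.g t) p 𝔞 w ≤ (Lam hN S.f p 𝔞 w) ^ (1/ε') := by
    apply csSup_le himg_ne_g
    rintro v ⟨x, hx, rfl⟩
    exact hpt_up x hx
  -- pointwise lower bound
  have hpt_lo : ∀ x ∈ cube N, lam hN S.f p 𝔞 w x ≤ (Lam hN (Ft.g t) p 𝔞 w) ^ (1/ε') := by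
    intro x hx
    have h1 := ((main w 𝔞 x hx).1).1
    have hf := hlamf_bounds w 𝔞 x hx
    have hfpos : 0 < lam hN S.f p 𝔞 w x := lt_of_lt_of_le (pow_pos hγ'pos _) hf.1
    have key2 : (lam hN S.f p 𝔞 w x) ^ ε' ≤ b ^ w.length * lam hN S.f p 𝔞 w x := by
      have e1 : (lam hN S.f p 𝔞 w x) ^ ε'
          = (lam hN S.f p 𝔞 w x) ^ (ε' - 1) * lam hN S.f p 𝔞 w x := by
        rw [show ε' = (ε' - 1) + 1 by ring, Real.rpow_add hfpos, Real.rpow_one]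
        ring_nf
      have hB : (lam hN S.f p 𝔞 w x) ^ (ε' - 1) ≤ (γ ^ w.length : ℝ) ^ (ε' - 1) :=
        Real.rpow_le_rpow hfpos.le hf.2 (by linarith)
      have hBn : (γ ^ w.length : ℝ) ^ (ε' - 1) = b ^ w.length := by
        rw [hb_def, ← Real.rpow_natCast (γ ^ (ε' - 1)) w.length,
          ← Real.rpow_natCast γ w.length, ← Real.rpow_mul hγpos.le,
          ← Real.rpow_mul hγpos.le, mul_comm (ε' - 1) (w.length : ℝ)]
      rw [e1]
      apply mul_le_mul_of_nonneg_right _ hfpos.le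
      rw [← hBn]
      exact hB
    have h8 : lam hN (Ft.g t) p 𝔞 w x ≤ Lam hN (Ft.g t) p 𝔞 w :=
      le_csSup hbddg ⟨x, hx, rfl⟩
    have h9 : (lam hN S.f p 𝔞 w x) ^ ε' ≤ Lam hN (Ft.g t) p 𝔞 w :=
      key2.trans (h1.trans h8)
    have h10 : ((lam hN S.f p 𝔞 w x) ^ ε') ^ (1/ε') ≤ (Lam hN (Ft.g t) p 𝔞 w) ^ (1/ε') :=
      Real.rpow_le_rpow (Real.rpow_nonneg hfpos.le _) h9 hexp2
    have h11 : ((lam hN S.f p 𝔞 w x) ^ ε') ^ (1/ε') = lam hN S.f p 𝔞 w x := by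
      rw [← Real.rpow_mul hfpos.le, mul_one_div, div_self (ne_of_gt hε'pos), Real.rpow_one]
    rwa [h11] at h10
  have hΛf_le2 : Lam hN S.f p 𝔞 w ≤ (Lam hN (Ft.g t) p 𝔞 w) ^ (1/ε') := by
    apply csSup_le himg_ne_f
    rintro v ⟨x, hx, rfl⟩
    exact hpt_lo x hx
  have final1 : (Lam hN S.f p 𝔞 w) ^ ε' ≤ Lam hN (Ft.g t) p 𝔞 w := by
    calc (Lam hN S.f p 𝔞 w) ^ ε' ≤ ((Lam hN (Ft.g t) p 𝔞 w) ^ (1/ε')) ^ ε' :=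
          Real.rpow_le_rpow hΛf_pos.le hΛf_le2 hε'pos.le
      _ = Lam hN (Ft.g t) p 𝔞 w := by
          rw [← Real.rpow_mul hΛg_pos.le, one_div, inv_mul_cancel₀ (ne_of_gt hε'pos),
            Real.rpow_one]
  constructor
  · have hpos := Real.rpow_pos_of_pos hΛf_pos ε'
    linarith
  · have h2 : 0 < (Lam hN S.f p 𝔞 w) ^ (1/ε') := Real.rpow_pos_of_pos hΛf_pos _
    linarith


end Paper
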